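/- arXiv:0803.2076 — 3 statements merged into one kernel-verified Lean document; each statement's English description precedes it below -/
import Mathlib

section
/- The set W⁰ = {w ∈ W'_aff : w•0 is restricted and dominant} is finite, and the map W⁰ → W sending an element t_λ·v (λ ∈ X, v ∈ W) to its finite Weyl group component v is a bijection. -/
/-- A package of data and axioms encoding a finite reduced crystallographic root system
`R` spanning a real vector space `E`, with a chosen system of positive roots `Rpos`,
simple roots `simples`, coroot pairing `coroot` (so `coroot α x = ⟨x, α∨⟩`),
Weyl group `W` (as a group of linear automorphisms of `E`), longest element `w0`,
half-sum of positive roots `rho`, and an integer `p` with `⟨ρ, α∨⟩ < p` for all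
positive roots `α` (i.e. `p` is bigger than the Coxeter number). -/
structure RootSystemData (E : Type) [AddCommGroup E] [Module ℝ E] : Type where
  R : Finset E
  Rpos : Finset E
  simples : Finset E
  coroot : E → (E →ₗ[ℝ] ℝ)
  W : Subgroup (E ≃ₗ[ℝ] E)
  w0 : E ≃ₗ[ℝ] E
  rho : E
  p : ℤ
  finiteDim : FiniteDimensional ℝ E
  span_eq : Submodule.span ℝ (R : Set E) = ⊤
  zero_not_mem : (0 : E) ∉ R
  reduced : ∀ α ∈ R, ∀ c : ℝ, c • α ∈ R → c = 1 ∨ c = -1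
  rpos_subset : Rpos ⊆ R
  neg_mem : ∀ α ∈ R, -α ∈ R
  pos_iff : ∀ α ∈ R, (α ∈ Rpos ↔ -α ∉ Rpos)
  simples_subset : simples ⊆ Rpos
  pos_sum_simples : ∀ α ∈ Rpos, ∃ c : E → ℕ, α = ∑ β ∈ simples, (c β : ℝ) • β
  coroot_self : ∀ α ∈ R, coroot α α = 2
  crystallographic : ∀ α ∈ R, ∀ β ∈ R, ∃ n : ℤ, coroot α β = (n : ℝ)
  reflection_mem : ∀ α ∈ R, ∀ β ∈ R, β - coroot α β • α ∈ R
  W_gen : W = Subgroup.closure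
    {s : E ≃ₗ[ℝ] E | ∃ α ∈ R, ∀ x : E, s x = x - coroot α x • α}
  W_root_stable : ∀ v ∈ W, ∀ α ∈ R, v α ∈ R
  W_equivariant : ∀ v ∈ W, ∀ α x : E, coroot (v α) (v x) = coroot α x
  w0_mem : w0 ∈ W
  w0_neg : ∀ α ∈ Rpos, -(w0 α) ∈ Rpos
  w0_sq : w0 * w0 = 1
  nondeg : ∀ x : E, (∀ α ∈ R, coroot α x = 0) → x = 0
  rho_def : (2 : ℝ) • rho = ∑ α ∈ Rpos, α
  rho_simple : ∀ α ∈ simples, coroot α rho = 1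
  p_pos : 0 < p
  p_gt : ∀ α ∈ Rpos, coroot α rho < (p : ℝ)

namespace RootSystemData

variable {E : Type} [AddCommGroup E] [Module ℝ E] [DecidableEq E] (D : RootSystemData E)

/-- Membership in the weight lattice `X = {λ ∈ E : ⟨λ, α∨⟩ ∈ ℤ for all α ∈ R}`. -/
def IsWeight (x : E) : Prop := ∀ α ∈ D.R, ∃ n : ℤ, D.coroot α x = (n : ℝ)

/-- A weight `μ` is dominant if `⟨μ, α∨⟩ ≥ 0` for all simple roots `α`. -/
def IsDominant (μ : E) : Prop := ∀ α ∈ D.simples, 0 ≤ D.coroot α μ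

/-- A weight `μ` is restricted if `⟨μ, α∨⟩ ≤ p - 1` for all simple roots `α`. -/
def IsRestricted (μ : E) : Prop := ∀ α ∈ D.simples, D.coroot α μ ≤ (D.p : ℝ) - 1

/-- The value of the dot-action of the element `t_lam · v` of the extended affine Weyl
group `W'_aff = W ⋉ X` on the weight `0`:  `(t_lam · v) • 0 = v(0 + ρ) - ρ + p • lam`. -/
def dotZero (v : E ≃ₗ[ℝ] E) (lam : E) : E := v D.rho - D.rho + (D.p : ℝ) • lam

/-- The condition `t_lam · v ∈ W⁰`, i.e. `(t_lam · v) • 0` is restricted and dominant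
(together with the requirements `v ∈ W`, `lam ∈ X`). -/
def InW0 (v : E ≃ₗ[ℝ] E) (lam : E) : Prop :=
  v ∈ D.W ∧ D.IsWeight lam ∧ D.IsDominant (D.dotZero v lam) ∧ D.IsRestricted (D.dotZero v lam)

/-- The Iwahori–Matsumoto length of the element `w · t_x` of `W'_aff`:
`ℓ(w·t_x) = Σ_{α ∈ R⁺ ∩ w⁻¹(R⁺)} |⟨x,α∨⟩| + Σ_{α ∈ R⁺ ∩ w⁻¹(R⁻)} |1 + ⟨x,α∨⟩|`. -/
noncomputable def len (w : E ≃ₗ[ℝ] E) (x : E) : ℝ :=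
  (∑ α ∈ D.Rpos.filter (fun α => w α ∈ D.Rpos), |D.coroot α x|) +
    (∑ α ∈ D.Rpos.filter (fun α => -(w α) ∈ D.Rpos), |1 + D.coroot α x|)

/-- The length of `t_lam · v = v · t_{v⁻¹ lam}`. -/
noncomputable def lenT (v : E ≃ₗ[ℝ] E) (lam : E) : ℝ := D.len v (v.symm lam)

end RootSystemData

/-!
The sum `Σ_γ γ∨ ⊗ γ∨` is a `W`-invariant inner product on `E`. For it, distinct simple roots make
obtuse angles and lie in the half-space `(·, ρ) > 0`, so they are linearly independent; and
reflecting a non-simple positive root in a suitable simple root lowers its height `(β, ρ)`, so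
every coroot is an integral combination of simple coroots. Hence a weight is the same as an
integral assignment of values `⟨λ, μ∨⟩` on the simple roots `μ`.

For `v ∈ W` and simple `μ`, `⟨(t_λ v) • 0, μ∨⟩ = ⟨ρ, (v⁻¹ μ)∨⟩ - 1 + p ⟨λ, μ∨⟩`, and
`1 ≤ |⟨ρ, β∨⟩| ≤ p - 1` for every root `β`. So `t_λ v ∈ W⁰` has exactly one solution `λ`:
`⟨λ, μ∨⟩` is `0` or `1` according as `v⁻¹ μ` is positive or negative. Finally `W` is finite since
it acts faithfully on `R`.
-/

theorem LinearMap.BilinForm.exists_apply_eq_of_linearIndependent {K V ι : Type*} [Field K]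
    [AddCommGroup V] [Module K V] [Fintype ι] (B : LinearMap.BilinForm K V)
    (hB : B.toQuadraticMap.Anisotropic) {v : ι → V} (hv : LinearIndependent K v) (t : ι → K) :
    ∃ x, ∀ i, B (v i) x = t i := by
  let L : (ι → K) →ₗ[K] ι → K := LinearMap.pi (fun i => B (v i)) ∘ₗ Fintype.linearCombination K v
  have hL : Function.Injective L := by
    rw [← LinearMap.ker_eq_bot, LinearMap.ker_eq_bot']
    intro c hc
    have hw : ∑ i, c i • v i = 0 := by
      refine hB _ ?_
      have hc' : ∀ i, B (v i) (∑ j, c j • v j) = 0 := fun i => by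
        simpa [L, Fintype.linearCombination_apply] using congrFun hc i
      rw [LinearMap.BilinMap.toQuadraticMap_apply, map_sum B, LinearMap.sum_apply]
      simp only [map_smul, LinearMap.smul_apply, hc', smul_zero, Finset.sum_const_zero]
    exact funext (Fintype.linearIndependent_iff.mp hv c hw)
  obtain ⟨c, hc⟩ := LinearMap.injective_iff_surjective.mp hL t
  exact ⟨Fintype.linearCombination K v c, congrFun hc⟩

namespace RootSystemData

variable {E : Type} [AddCommGroup E] [Module ℝ E] (D : RootSystemData E)

noncomputable def rootForm : LinearMap.BilinForm ℝ E :=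
  ∑ γ ∈ D.R, (LinearMap.mul ℝ ℝ).compl₁₂ (D.coroot γ) (D.coroot γ)

lemma rootForm_apply (x y : E) : D.rootForm x y = ∑ γ ∈ D.R, D.coroot γ x * D.coroot γ y := by
  simp [rootForm]

lemma rootForm_comm (x y : E) : D.rootForm x y = D.rootForm y x := by
  simp only [rootForm_apply, mul_comm]

lemma rootForm_posDef : D.rootForm.toQuadraticMap.PosDef := by
  intro x hx
  rw [LinearMap.BilinMap.toQuadraticMap_apply, rootForm_apply]
  refine lt_of_le_of_ne (Finset.sum_nonneg fun γ _ => mul_self_nonneg _) fun h => hx ?_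
  refine D.nondeg x fun γ hγ => mul_self_eq_zero.mp ?_
  exact (Finset.sum_eq_zero_iff_of_nonneg fun γ _ => mul_self_nonneg _).mp h.symm γ hγ

lemma rootForm_self_pos {x : E} (hx : x ≠ 0) : 0 < D.rootForm x x := D.rootForm_posDef x hx

lemma rootForm_root_pos {α : E} (hα : α ∈ D.R) : 0 < D.rootForm α α :=
  D.rootForm_self_pos fun h => D.zero_not_mem (h ▸ hα)

lemma rootForm_map {v : E ≃ₗ[ℝ] E} (hv : v ∈ D.W) (x y : E) :
    D.rootForm (v x) (v y) = D.rootForm x y := by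
  rw [rootForm_apply, rootForm_apply]
  refine Finset.sum_nbij' v.symm v (fun γ hγ => D.W_root_stable _ (inv_mem hv) γ hγ)
    (fun γ hγ => D.W_root_stable v hv γ hγ) (fun γ _ => v.apply_symm_apply γ)
    (fun γ _ => v.symm_apply_apply γ) fun γ _ => ?_
  conv_lhs => rw [← v.apply_symm_apply γ, D.W_equivariant v hv, D.W_equivariant v hv]

noncomputable def reflection {α : E} (hα : α ∈ D.R) : E ≃ₗ[ℝ] E :=
  have h : (LinearMap.id - (D.coroot α).smulRight α) ∘ₗ (LinearMap.id - (D.coroot α).smulRight α)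
      = LinearMap.id := by
    ext x
    simp only [LinearMap.comp_apply, LinearMap.sub_apply, LinearMap.id_apply,
      LinearMap.smulRight_apply, map_sub, map_smul, D.coroot_self α hα]
    module
  LinearEquiv.ofLinearMap _ _ h h

lemma reflection_apply {α : E} (hα : α ∈ D.R) (x : E) :
    D.reflection hα x = x - D.coroot α x • α := rfl

lemma reflection_reflection {α : E} (hα : α ∈ D.R) (x : E) :
    D.reflection hα (D.reflection hα x) = x :=
  (D.reflection hα).apply_symm_apply x

lemma reflection_mem_W {α : E} (hα : α ∈ D.R) : D.reflection hα ∈ D.W := by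
  rw [D.W_gen]
  exact Subgroup.subset_closure ⟨α, hα, fun _ => rfl⟩

lemma coroot_mul_rootForm {α : E} (hα : α ∈ D.R) (x : E) :
    D.coroot α x * D.rootForm α α = 2 * D.rootForm x α := by
  have h := D.rootForm_map (D.reflection_mem_W hα) x α
  simp only [reflection_apply, D.coroot_self α hα, map_sub, map_smul, LinearMap.sub_apply,
    LinearMap.smul_apply, smul_eq_mul] at h
  linarith

lemma coroot_pos_iff {α : E} (hα : α ∈ D.R) (x : E) :
    0 < D.coroot α x ↔ 0 < D.rootForm α x := by
  have h := D.coroot_mul_rootForm hα x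
  rw [D.rootForm_comm x α] at h
  have hαα := D.rootForm_root_pos hα
  constructor <;> intro <;> nlinarith

lemma coroot_neg {α : E} (hα : α ∈ D.R) : D.coroot (-α) = -D.coroot α := by
  ext x
  have h := D.coroot_mul_rootForm (D.neg_mem α hα) x
  simp only [map_neg, LinearMap.neg_apply, neg_neg] at h
  have := D.coroot_mul_rootForm hα x
  have hpos := D.rootForm_root_pos hα
  rw [LinearMap.neg_apply]
  nlinarith

lemma coroot_reflection_apply {α : E} (hα : α ∈ D.R) (β : E) :
    D.coroot (D.reflection hα β) = D.coroot β - D.coroot β α • D.coroot α := by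
  ext y
  have h := D.W_equivariant _ (D.reflection_mem_W hα) β (D.reflection hα y)
  rw [D.reflection_reflection] at h
  rw [h, reflection_apply, map_sub, map_smul]
  simp [mul_comm]

lemma neg_mem_Rpos_of_notMem {β : E} (hβ : β ∈ D.R) (h : β ∉ D.Rpos) : -β ∈ D.Rpos := by
  have := D.pos_iff β hβ
  tauto

lemma rootForm_simple_rho {μ : E} (hμ : μ ∈ D.simples) :
    D.rootForm μ D.rho = D.rootForm μ μ / 2 := by
  have h := D.coroot_mul_rootForm (D.rpos_subset (D.simples_subset hμ)) D.rho
  rw [D.rho_simple μ hμ, D.rootForm_comm D.rho] at h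
  linarith

lemma rootForm_rho_pos {β : E} (hβ : β ∈ D.Rpos) : 0 < D.rootForm β D.rho := by
  obtain ⟨c, rfl⟩ := D.pos_sum_simples β hβ
  have hsimple : ∀ μ ∈ D.simples, 0 < D.rootForm μ D.rho := fun μ hμ => by
    rw [D.rootForm_simple_rho hμ]
    exact half_pos (D.rootForm_root_pos (D.rpos_subset (D.simples_subset hμ)))
  simp only [map_sum, map_smul, LinearMap.sum_apply, LinearMap.smul_apply, smul_eq_mul]
  refine Finset.sum_pos' (fun μ hμ => mul_nonneg (Nat.cast_nonneg _) (hsimple μ hμ).le) ?_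
  by_contra! h
  refine D.zero_not_mem (D.rpos_subset ?_)
  convert hβ using 1
  refine (Finset.sum_eq_zero fun μ hμ => ?_).symm
  have := (h μ hμ).antisymm (mul_nonneg (Nat.cast_nonneg _) (hsimple μ hμ).le)
  rw [(mul_eq_zero.mp this).resolve_right (hsimple μ hμ).ne', zero_smul]

lemma coroot_rho_pos {β : E} (hβ : β ∈ D.Rpos) : 0 < D.coroot β D.rho :=
  (D.coroot_pos_iff (D.rpos_subset hβ) _).mpr (D.rootForm_rho_pos hβ)

lemma coroot_rho_ne_zero {β : E} (hβ : β ∈ D.R) : D.coroot β D.rho ≠ 0 := by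
  by_cases hpos : β ∈ D.Rpos
  · exact (D.coroot_rho_pos hpos).ne'
  · have := D.coroot_rho_pos (D.neg_mem_Rpos_of_notMem hβ hpos)
    rw [D.coroot_neg hβ, LinearMap.neg_apply, neg_pos] at this
    exact this.ne

/-- If `(μ, ν) > 0`, both Cartan integers are positive, and neither is `1` because
`⟨ρ, (s_ν μ)∨⟩ = 1 - ⟨μ, ν∨⟩` cannot vanish; but if both are at least `2` then
`(μ - ν, μ - ν) ≤ 0`. -/
lemma rootForm_simples_nonpos {μ ν : E} (hμ : μ ∈ D.simples) (hν : ν ∈ D.simples)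
    (hne : μ ≠ ν) :
    D.rootForm μ ν ≤ 0 := by
  have hμR := D.rpos_subset (D.simples_subset hμ)
  have hνR := D.rpos_subset (D.simples_subset hν)
  by_contra! hpos
  have cartan_ge_two : ∀ {α β : E}, α ∈ D.simples → β ∈ D.simples → 0 < D.rootForm α β →
      2 ≤ D.coroot α β := by
    intro α β hα hβ hαβ
    have hαR := D.rpos_subset (D.simples_subset hα)
    have hβR := D.rpos_subset (D.simples_subset hβ)
    obtain ⟨n, hn⟩ := D.crystallographic α hαR β hβR
    have hne : D.coroot (D.reflection hβR α) D.rho ≠ 0 :=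
      D.coroot_rho_ne_zero (D.reflection_mem β hβR α hαR)
    rw [D.coroot_reflection_apply, LinearMap.sub_apply, LinearMap.smul_apply,
      D.rho_simple α hα, D.rho_simple β hβ, smul_eq_mul, mul_one] at hne
    have hpos := (D.coroot_pos_iff hαR β).mpr hαβ
    rw [hn] at hne hpos ⊢
    have : (1 : ℤ) < n := by
      have h1 : (0 : ℤ) < n := by exact_mod_cast hpos
      have h2 : n ≠ 1 := fun h => hne (by simp [h])
      omega
    exact_mod_cast this
  have hμν := D.coroot_mul_rootForm hμR ν
  have hνμ := D.coroot_mul_rootForm hνR μ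
  have h1 := cartan_ge_two hμ hν hpos
  have h2 := cartan_ge_two hν hμ (by rwa [D.rootForm_comm])
  have hsub : D.rootForm (μ - ν) (μ - ν) ≤ 0 := by
    simp only [map_sub, LinearMap.sub_apply]
    rw [D.rootForm_comm ν μ] at hμν ⊢
    nlinarith [D.rootForm_root_pos hμR, D.rootForm_root_pos hνR]
  exact hne (sub_eq_zero.mp (by_contra fun h => (D.rootForm_self_pos h).not_ge hsub))

lemma linearIndepOn_simples : LinearIndepOn ℝ id (D.simples : Set E) :=
  D.rootForm.linearIndependent_of_pairwise_le_zero D.rootForm_posDef (D.rootForm.flip D.rho) _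
    (fun μ => D.rootForm_rho_pos (D.simples_subset μ.2))
    fun μ ν hne => D.rootForm_simples_nonpos μ.2 ν.2 (Subtype.coe_ne_coe.mpr hne)

lemma exists_coroot_simples_eq (t : E → ℝ) : ∃ x : E, ∀ μ ∈ D.simples, D.coroot μ x = t μ := by
  obtain ⟨x, hx⟩ := D.rootForm.exists_apply_eq_of_linearIndependent
    D.rootForm_posDef.anisotropic D.linearIndepOn_simples fun μ => t μ * D.rootForm μ μ / 2
  refine ⟨x, fun μ hμ => ?_⟩
  have h := D.coroot_mul_rootForm (D.rpos_subset (D.simples_subset hμ)) x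
  have hx' : D.rootForm μ x = _ := hx ⟨μ, hμ⟩
  rw [D.rootForm_comm x μ, hx'] at h
  have := D.rootForm_root_pos (D.rpos_subset (D.simples_subset hμ))
  field_simp at h
  linarith

/-- Otherwise `β + (-s_δ β) = ⟨β, δ∨⟩ δ` is a relation among the simple roots with nonnegative
coefficients off `δ`, which forces `β ∈ ℝ δ`. -/
lemma reflection_simple_mem_Rpos {δ β : E} (hδ : δ ∈ D.simples) (hβ : β ∈ D.Rpos) (hne : β ≠ δ) :
    D.reflection (D.rpos_subset (D.simples_subset hδ)) β ∈ D.Rpos := by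
  classical
  have hδR := D.rpos_subset (D.simples_subset hδ)
  have hβR := D.rpos_subset hβ
  by_contra hneg
  obtain ⟨c, hc⟩ := D.pos_sum_simples β hβ
  obtain ⟨d, hd⟩ := D.pos_sum_simples _
    (D.neg_mem_Rpos_of_notMem (D.reflection_mem δ hδR β hβR) hneg)
  have hsum : ∑ κ ∈ D.simples,
      ((c κ + d κ : ℝ) - if κ = δ then D.coroot δ β else 0) • id κ = 0 := by
    simp only [sub_smul, add_smul, Finset.sum_sub_distrib, Finset.sum_add_distrib, id, ite_smul,
      zero_smul, Finset.sum_ite_eq', if_pos hδ, ← hc, ← hd]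
    abel
  have hvanish := linearIndepOn_finset_iff.mp D.linearIndepOn_simples _ hsum
  have hβδ : β = (c δ : ℝ) • δ := by
    conv_lhs => rw [hc]
    refine Finset.sum_eq_single_of_mem δ hδ fun κ hκ hκδ => ?_
    have := hvanish κ hκ
    rw [if_neg hκδ, sub_zero] at this
    have : c κ = 0 := by
      have := (add_eq_zero_iff_of_nonneg (Nat.cast_nonneg _) (Nat.cast_nonneg _)).mp this
      exact_mod_cast this.1
    rw [this, Nat.cast_zero, zero_smul]
  rcases D.reduced δ hδR _ (hβδ ▸ hβR) with h | h
  · exact hne (by rw [hβδ, h, one_smul])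
  · linarith [(Nat.cast_nonneg (c δ) : (0 : ℝ) ≤ c δ)]

lemma exists_simple_rootForm_pos {β : E} (hβ : β ∈ D.Rpos) :
    ∃ δ ∈ D.simples, 0 < D.rootForm δ β := by
  obtain ⟨c, hc⟩ := D.pos_sum_simples β hβ
  have h : 0 < D.rootForm (∑ κ ∈ D.simples, (c κ : ℝ) • κ) β := by
    rw [← hc]
    exact D.rootForm_root_pos (D.rpos_subset hβ)
  simp only [map_sum, map_smul, LinearMap.sum_apply, LinearMap.smul_apply, smul_eq_mul] at h
  obtain ⟨δ, hδ, hpos⟩ := Finset.exists_lt_of_sum_lt (h.trans_eq' Finset.sum_const_zero.symm)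
  exact ⟨δ, hδ, pos_of_mul_pos_right hpos (Nat.cast_nonneg _)⟩

lemma coroot_mem_closure_simples {β : E} (hβ : β ∈ D.R) :
    D.coroot β ∈ AddSubgroup.closure (D.coroot '' D.simples) := by
  classical
  set S := AddSubgroup.closure (D.coroot '' D.simples)
  suffices hpos : ∀ β ∈ D.Rpos, D.coroot β ∈ S by
    by_cases h : β ∈ D.Rpos
    · exact hpos β h
    · simpa [D.coroot_neg hβ] using hpos _ (D.neg_mem_Rpos_of_notMem hβ h)
  by_contra! hbad
  obtain ⟨β, hβ, hmin⟩ := (D.Rpos.filter fun β => D.coroot β ∉ S).exists_min_image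
    (fun β => D.rootForm β D.rho) (by simpa [Finset.filter_nonempty_iff] using hbad)
  obtain ⟨hβ, hβS⟩ := Finset.mem_filter.mp hβ
  have hnot : β ∉ D.simples := fun h => hβS (AddSubgroup.subset_closure (Set.mem_image_of_mem _ h))
  obtain ⟨δ, hδ, hδβ⟩ := D.exists_simple_rootForm_pos hβ
  have hδR := D.rpos_subset (D.simples_subset hδ)
  have hγ := D.reflection_simple_mem_Rpos hδ hβ (ne_of_mem_of_not_mem hδ hnot).symm
  have hlt : D.rootForm (D.reflection hδR β) D.rho < D.rootForm β D.rho := by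
    have hk := (D.coroot_pos_iff hδR β).mpr hδβ
    have := D.rootForm_rho_pos (D.simples_subset hδ)
    simp only [reflection_apply, map_sub, map_smul, LinearMap.sub_apply, LinearMap.smul_apply,
      smul_eq_mul]
    nlinarith
  have hγS : D.coroot (D.reflection hδR β) ∈ S := by
    by_contra h
    exact (hmin _ (Finset.mem_filter.mpr ⟨hγ, h⟩)).not_gt hlt
  obtain ⟨k, hk⟩ := D.crystallographic β (D.rpos_subset hβ) δ hδR
  have hsplit : D.coroot β = D.coroot (D.reflection hδR β) + k • D.coroot δ := by
    ext y
    simp [D.coroot_reflection_apply, hk]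
  apply hβS
  rw [hsplit]
  exact add_mem hγS (zsmul_mem (AddSubgroup.subset_closure (Set.mem_image_of_mem _ hδ)) k)

lemma coroot_apply_mem {S : AddSubgroup ℝ} {x : E} (hx : ∀ μ ∈ D.simples, D.coroot μ x ∈ S)
    {β : E} (hβ : β ∈ D.R) : D.coroot β x ∈ S := by
  have hle : AddSubgroup.closure (D.coroot '' D.simples) ≤
      S.comap (Module.Dual.eval ℝ E x).toAddMonoidHom := by
    rw [AddSubgroup.closure_le]
    rintro _ ⟨μ, hμ, rfl⟩
    exact hx μ hμ
  exact hle (D.coroot_mem_closure_simples hβ)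

lemma isWeight_of_simples {x : E} (hx : ∀ μ ∈ D.simples, ∃ n : ℤ, D.coroot μ x = n) :
    D.IsWeight x := fun _ hβ =>
  D.coroot_apply_mem (S := (Int.castAddHom ℝ).range)
    (fun μ hμ => (hx μ hμ).imp fun _ h => h.symm) hβ |>.imp fun _ h => h.symm

lemma eq_of_coroot_simples_eq {x y : E} (h : ∀ μ ∈ D.simples, D.coroot μ x = D.coroot μ y) :
    x = y := by
  refine sub_eq_zero.mp (D.nondeg _ fun β hβ => ?_)
  exact D.coroot_apply_mem (S := ⊥) (fun μ hμ => by simp [h μ hμ]) hβ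

lemma coroot_rho_mem_Icc {β : E} (hβ : β ∈ D.Rpos) :
    D.coroot β D.rho ∈ Set.Icc 1 ((D.p : ℝ) - 1) := by
  have hβR := D.rpos_subset hβ
  obtain ⟨n, hn⟩ :=
    D.isWeight_of_simples (x := D.rho) (fun μ hμ => ⟨1, by simp [D.rho_simple μ hμ]⟩) β hβR
  have hpos := D.coroot_rho_pos hβ
  have hlt := D.p_gt β hβ
  rw [hn] at hpos hlt ⊢
  have h1 : 0 < n := by exact_mod_cast hpos
  have h2 : n < D.p := by exact_mod_cast hlt
  constructor
  · exact_mod_cast h1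
  · have : n ≤ D.p - 1 := by omega
    exact_mod_cast this

lemma coroot_dotZero {v : E ≃ₗ[ℝ] E} (hv : v ∈ D.W) (lam μ : E) :
    D.coroot μ (D.dotZero v lam) =
      D.coroot (v.symm μ) D.rho - D.coroot μ D.rho + D.p * D.coroot μ lam := by
  conv_rhs => rw [← D.W_equivariant v hv, v.apply_symm_apply]
  simp only [dotZero, map_add, map_sub, map_smul, smul_eq_mul]

lemma exists_inW0 {v : E ≃ₗ[ℝ] E} (hv : v ∈ D.W) : ∃ lam : E, D.InW0 v lam := by
  classical
  let t : E → ℤ := fun μ => if v.symm μ ∈ D.Rpos then 0 else 1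
  obtain ⟨lam, hlam⟩ := D.exists_coroot_simples_eq fun μ => t μ
  have hbounds : ∀ μ ∈ D.simples, D.coroot μ (D.dotZero v lam) ∈ Set.Icc 0 ((D.p : ℝ) - 1) := by
    intro μ hμ
    have hμR := D.rpos_subset (D.simples_subset hμ)
    have hβR : v.symm μ ∈ D.R := D.W_root_stable _ (inv_mem hv) μ hμR
    rw [D.coroot_dotZero hv, D.rho_simple μ hμ, hlam μ hμ]
    by_cases hpos : v.symm μ ∈ D.Rpos
    · have := D.coroot_rho_mem_Icc hpos
      simp only [t, if_pos hpos, Int.cast_zero, mul_zero, Set.mem_Icc] at this ⊢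
      constructor <;> linarith
    · have := D.coroot_rho_mem_Icc (D.neg_mem_Rpos_of_notMem hβR hpos)
      simp only [t, if_neg hpos, D.coroot_neg hβR, LinearMap.neg_apply, Int.cast_one, mul_one,
        Set.mem_Icc] at this ⊢
      constructor <;> linarith
  exact ⟨lam, hv, D.isWeight_of_simples fun μ hμ => ⟨t μ, hlam μ hμ⟩,
    fun μ hμ => (hbounds μ hμ).1, fun μ hμ => (hbounds μ hμ).2⟩

lemma eq_of_inW0 {v : E ≃ₗ[ℝ] E} {lam lam' : E} (h : D.InW0 v lam) (h' : D.InW0 v lam') :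
    lam = lam' := by
  obtain ⟨hv, hw, hdom, hres⟩ := h
  obtain ⟨-, hw', hdom', hres'⟩ := h'
  refine D.eq_of_coroot_simples_eq fun μ hμ => ?_
  have hμR := D.rpos_subset (D.simples_subset hμ)
  obtain ⟨m, hm⟩ := hw μ hμR
  obtain ⟨m', hm'⟩ := hw' μ hμR
  have h1 := hdom μ hμ
  have h2 := hres μ hμ
  have h3 := hdom' μ hμ
  have h4 := hres' μ hμ
  rw [D.coroot_dotZero hv, hm] at h1 h2
  rw [D.coroot_dotZero hv, hm'] at h3 h4
  have hbound : |D.p * (m - m')| < D.p := by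
    rw [abs_lt]
    constructor
    · have : (-D.p : ℝ) < D.p * (m - m') := by linarith
      exact_mod_cast this
    · have : (D.p * (m - m') : ℝ) < D.p := by linarith
      exact_mod_cast this
  have := Int.eq_zero_of_abs_lt_dvd (dvd_mul_right _ _) hbound
  rw [hm, hm', sub_eq_zero.mp ((mul_eq_zero.mp this).resolve_left D.p_pos.ne')]

lemma W_finite : (D.W : Set (E ≃ₗ[ℝ] E)).Finite := by
  rw [← Set.finite_coe_iff]
  refine Finite.of_injective (fun v : D.W => fun α : D.R =>
    (⟨v.1 α, D.W_root_stable v.1 v.2 α α.2⟩ : D.R)) fun v w h => Subtype.ext ?_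
  refine LinearEquiv.toLinearMap_injective (LinearMap.ext_on D.span_eq fun α hα => ?_)
  exact congrArg Subtype.val (congrFun h ⟨α, hα⟩)

end RootSystemData

theorem statement1_general {E : Type} [AddCommGroup E] [Module ℝ E]
    (D : RootSystemData E) :
    {q : (E ≃ₗ[ℝ] E) × E | D.InW0 q.1 q.2}.Finite ∧
      Set.BijOn (fun q : (E ≃ₗ[ℝ] E) × E => q.1)
        {q : (E ≃ₗ[ℝ] E) × E | D.InW0 q.1 q.2} (D.W : Set (E ≃ₗ[ℝ] E)) := by
  have hinj : Set.InjOn (fun q : (E ≃ₗ[ℝ] E) × E => q.1) {q | D.InW0 q.1 q.2} :=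
    fun q hq q' hq' (h : q.1 = q'.1) => Prod.ext h (D.eq_of_inW0 (h ▸ hq) hq')
  refine ⟨Set.Finite.of_finite_image (D.W_finite.subset ?_) hinj, fun q hq => hq.1, hinj, ?_⟩
  · rintro _ ⟨q, hq, rfl⟩
    exact hq.1
  · intro v hv
    obtain ⟨lam, hlam⟩ := D.exists_inW0 hv
    exact ⟨(v, lam), hlam, rfl⟩

/-- The set `W⁰ = {w ∈ W'_aff : w • 0 is restricted and dominant}` is
finite, and the map `W⁰ → W` sending an element `t_lam · v` (here encoded as the pair
`(v, lam)` with `v ∈ W`, `lam ∈ X`) to its finite Weyl group component `v` is a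
bijection onto `W`. -/
theorem statement1 {E : Type} [AddCommGroup E] [Module ℝ E] [DecidableEq E]
    (D : RootSystemData E) :
    {q : (E ≃ₗ[ℝ] E) × E | D.InW0 q.1 q.2}.Finite ∧
      Set.BijOn (fun q : (E ≃ₗ[ℝ] E) × E => q.1)
        {q : (E ≃ₗ[ℝ] E) × E | D.InW0 q.1 q.2} (D.W : Set (E ≃ₗ[ℝ] E)) :=
  statement1_general D
end

section
/- Let Ā be a finite-dimensional ℤ-graded k-algebra. Then the Jacobson radical of Ā (the intersection of all maximal left ideals of Ā) coincides with the graded radical rad^gr(Ā) (the intersection of all maximal graded left ideals of Ā); in particular, the Jacobson radical of Ā is a homogeneous (graded) two-sided ideal. -/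
/-!
The Jacobson radical `J` of an Artinian ring is nilpotent. Top-degree components multiply:
if `a, b` have no components above degrees `d, e`, then `(a * b)_(d+e) = a_d * b_e`. Hence the
left ideal spanned by the top components of elements of `J` is nilpotent, so it lies in `J`, and
removing top components one at a time shows that `J` is homogeneous. A homogeneous `J` lies in
every maximal graded left ideal `N`, since otherwise `J + N = A` would put a left-invertible
element `1 - j` into `N`.

Conversely, if `X' < X` are graded left ideals with no graded left ideal strictly between them,
then for homogeneous `s ∈ X \ X'` the ideal `{c | c * s ∈ X'}` is a maximal graded left ideal;
so `rad^gr` multiplies `X` into `X'`. Thus `rad^gr * X < X` for every nonzero graded left ideal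
`X`, and the descending chain condition makes `rad^gr` nilpotent, hence contained in `J`.
-/

/-- A submodule `N` of a graded module `M = ⊕ₙ Mₙ` (with grading `gM : ℤ → Submodule k M`)
is *graded* (homogeneous) if it is generated, as an `A`-module, by its homogeneous
elements; equivalently (for modules with a decomposition) `N = ⊕ₙ (N ∩ Mₙ)`. -/
def IsGradedSubmodule {k A M : Type} [Semiring k] [Ring A]
    [AddCommGroup M] [Module A M] [Module k M]
    (gM : ℤ → Submodule k M) (N : Submodule A M) : Prop :=
  N = Submodule.span A (⋃ n : ℤ, ((N : Set M) ∩ (gM n : Set M)))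

/-- A *maximal graded submodule*: a proper graded submodule which is maximal among
proper graded submodules. -/
def IsMaxGradedSubmodule {k A M : Type} [Semiring k] [Ring A]
    [AddCommGroup M] [Module A M] [Module k M]
    (gM : ℤ → Submodule k M) (N : Submodule A M) : Prop :=
  IsGradedSubmodule gM N ∧ N ≠ ⊤ ∧
    ∀ N' : Submodule A M, IsGradedSubmodule gM N' → N < N' → N' = ⊤

/-- The graded radical `rad^gr(M)` of a graded module: the intersection of all maximal
graded submodules. -/
def gradedRadicalMod {k A M : Type} [Semiring k] [Ring A]
    [AddCommGroup M] [Module A M] [Module k M]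
    (gM : ℤ → Submodule k M) : Submodule A M :=
  sInf {N : Submodule A M | IsMaxGradedSubmodule gM N}

/-- The graded radical `rad^gr(A)` of a graded algebra: the intersection of all
maximal graded left ideals. -/
def gradedRadical {k A : Type} [Semiring k] [Ring A] [Module k A]
    (gA : ℤ → Submodule k A) : Ideal A :=
  gradedRadicalMod gA

open DirectSum

theorem Ring.le_jacobson_of_isNilpotent {R : Type*} [Ring R] {I : Ideal R} (hI : IsNilpotent I) :
    I ≤ Ring.jacobson R := by
  obtain ⟨n, hn⟩ := hI
  intro x hx
  rw [← Ideal.jacobson_bot, Ideal.mem_jacobson_iff]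
  intro y
  have hyx : IsNilpotent (-(y * x)) :=
    ⟨n, by simpa [hn] using Ideal.pow_mem_pow (I.neg_mem (I.mul_mem_left y hx)) n⟩
  obtain ⟨z, hz⟩ := hyx.isUnit_one_sub.exists_left_inv
  refine ⟨z, (Submodule.mem_bot R).2 ?_⟩
  rw [← hz]
  noncomm_ring

section Graded

variable {σ A : Type*} [Ring A] [SetLike σ A] [AddSubmonoidClass σ A] (𝒜 : ℤ → σ)
  [GradedRing 𝒜]

def DegreeLE (d : ℤ) (a : A) : Prop := ∀ n, d < n → decompose 𝒜 a n = 0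

variable {𝒜}

theorem degreeLE_of_mem {d : ℤ} {a : A} (ha : a ∈ 𝒜 d) : DegreeLE 𝒜 d a :=
  fun _ hn => Subtype.ext (decompose_of_mem_ne 𝒜 ha hn.ne)

theorem DegreeLE.le_of_ne_zero {d : ℤ} {a : A} (ha : DegreeLE 𝒜 d a) {i : ℤ}
    (hi : decompose 𝒜 a i ≠ 0) : i ≤ d :=
  not_lt.1 fun h => hi (ha i h)

theorem coe_decompose_mul_eq_sum [∀ (i : ℤ) (x : 𝒜 i), Decidable (x ≠ 0)] (a b : A) (n : ℤ) :
    (decompose 𝒜 (a * b) n : A) =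
      ∑ i ∈ (decompose 𝒜 a).support, (decompose 𝒜 a i * decompose 𝒜 b (n - i) : A) := by
  conv_lhs => rw [← sum_support_decompose 𝒜 a]
  rw [Finset.sum_mul, decompose_sum, DFinsupp.finsetSum_apply, AddSubmonoidClass.coe_finsetSum]
  refine Finset.sum_congr rfl fun i _ => ?_
  rw [← coe_decompose_mul_add_of_left_mem 𝒜 (decompose 𝒜 a i).2, add_sub_cancel]

theorem DegreeLE.mul {d e : ℤ} {a b : A} (ha : DegreeLE 𝒜 d a) (hb : DegreeLE 𝒜 e b) :
    DegreeLE 𝒜 (d + e) (a * b) := by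
  classical
  intro n hn
  ext
  rw [coe_decompose_mul_eq_sum, ZeroMemClass.coe_zero]
  refine Finset.sum_eq_zero fun i hi => ?_
  have hid := ha.le_of_ne_zero (DFinsupp.mem_support_iff.1 hi)
  rw [hb (n - i) (by linarith), ZeroMemClass.coe_zero, mul_zero]

theorem DegreeLE.coe_decompose_mul {d e : ℤ} {a b : A} (ha : DegreeLE 𝒜 d a)
    (hb : DegreeLE 𝒜 e b) :
    (decompose 𝒜 (a * b) (d + e) : A) = decompose 𝒜 a d * decompose 𝒜 b e := by
  classical
  rw [coe_decompose_mul_eq_sum, Finset.sum_eq_single d, add_sub_cancel_left]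
  · intro i hi hne
    have hid := (ha.le_of_ne_zero (DFinsupp.mem_support_iff.1 hi)).lt_of_ne hne
    rw [hb (d + e - i) (by linarith), ZeroMemClass.coe_zero, mul_zero]
  · intro hd
    rw [DFinsupp.notMem_support_iff.1 hd, ZeroMemClass.coe_zero, zero_mul]

variable (𝒜) in
def leadingForms (I : Ideal A) : Set A :=
  {x | ∃ a ∈ I, ∃ d, DegreeLE 𝒜 d a ∧ (decompose 𝒜 a d : A) = x}

theorem leadingForms_mono {I I' : Ideal A} (h : I ≤ I') :
    leadingForms 𝒜 I ⊆ leadingForms 𝒜 I' :=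
  fun _ ⟨a, ha, d, hd, hx⟩ => ⟨a, h ha, d, hd, hx⟩

theorem leadingForms_bot : leadingForms 𝒜 (⊥ : Ideal A) = {0} := by
  ext x
  constructor
  · rintro ⟨a, ha, d, -, rfl⟩
    rw [(Submodule.mem_bot A).1 ha, decompose_zero]
    rfl
  · rintro rfl
    exact ⟨0, zero_mem _, 0, fun _ _ => by rw [decompose_zero]; rfl, by rw [decompose_zero]; rfl⟩

theorem mem_leadingForms_top {i : ℤ} {c : A} (hc : c ∈ 𝒜 i) : c ∈ leadingForms 𝒜 ⊤ :=
  ⟨c, Submodule.mem_top, i, degreeLE_of_mem hc, decompose_of_mem_same 𝒜 hc⟩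

theorem mul_mem_leadingForms_mul {I I' : Ideal A} {x y : A} (hx : x ∈ leadingForms 𝒜 I)
    (hy : y ∈ leadingForms 𝒜 I') : x * y ∈ leadingForms 𝒜 (I * I') := by
  obtain ⟨a, ha, d, hd, rfl⟩ := hx
  obtain ⟨b, hb, e, he, rfl⟩ := hy
  exact ⟨a * b, Ideal.mul_mem_mul ha hb, d + e, hd.mul he, hd.coe_decompose_mul he⟩

theorem mul_mem_leadingForms {I : Ideal A} {i : ℤ} {c y : A} (hc : c ∈ 𝒜 i)
    (hy : y ∈ leadingForms 𝒜 I) : c * y ∈ leadingForms 𝒜 I :=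
  leadingForms_mono Ideal.mul_le_right (mul_mem_leadingForms_mul (mem_leadingForms_top hc) hy)

variable (𝒜) in
def leadingIdeal (I : Ideal A) : Ideal A := Ideal.span (leadingForms 𝒜 I)

theorem leadingIdeal_mul_le (I I' : Ideal A) :
    leadingIdeal 𝒜 I * leadingIdeal 𝒜 I' ≤ leadingIdeal 𝒜 (I * I') := by
  classical
  refine Ideal.mul_le.2 fun x hx y hy => ?_
  induction hx using Submodule.closure_induction with
  | zero => rw [zero_mul]; exact zero_mem _
  | add x x' _ _ hx hx' => rw [add_mul]; exact add_mem hx hx'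
  | smul_mem c x hx =>
    rw [smul_eq_mul, mul_assoc]
    refine Ideal.mul_mem_left _ c ?_
    induction hy using Submodule.closure_induction with
    | zero => rw [mul_zero]; exact zero_mem _
    | add y y' _ _ hy hy' => rw [mul_add]; exact add_mem hy hy'
    | smul_mem c' y hy =>
      rw [smul_eq_mul, ← sum_support_decompose 𝒜 c', Finset.sum_mul, Finset.mul_sum]
      exact sum_mem fun i _ => Ideal.subset_span
        (mul_mem_leadingForms_mul hx (mul_mem_leadingForms (decompose 𝒜 c' i).2 hy))

theorem leadingIdeal_pow_le (I : Ideal A) (n : ℕ) :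
    leadingIdeal 𝒜 I ^ n ≤ leadingIdeal 𝒜 (I ^ n) := by
  induction n with
  | zero =>
    rw [Submodule.pow_zero, Submodule.pow_zero, Ideal.one_eq_top, top_le_iff,
      Ideal.eq_top_iff_one]
    exact Ideal.subset_span (mem_leadingForms_top SetLike.GradedOne.one_mem)
  | succ n ih =>
    rw [Submodule.pow_succ, Submodule.pow_succ]
    exact (Ideal.mul_mono_left ih).trans (leadingIdeal_mul_le _ _)

theorem leadingIdeal_bot : leadingIdeal 𝒜 (⊥ : Ideal A) = ⊥ := by
  rw [leadingIdeal, leadingForms_bot, Ideal.span_singleton_eq_bot]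

theorem Ideal.IsHomogeneous.of_leadingForms_subset {I : Ideal A} (h : leadingForms 𝒜 I ⊆ I) :
    I.IsHomogeneous 𝒜 := by
  classical
  suffices ∀ s : Finset ℤ, ∀ a ∈ I, (decompose 𝒜 a).support = s →
      ∀ i, (decompose 𝒜 a i : A) ∈ I from
    fun i a ha => this _ a ha rfl i
  intro s
  induction s using Finset.induction_on_max with
  | empty =>
    intro a _ hs i
    rw [DFinsupp.support_eq_empty.1 hs]
    exact zero_mem I
  | insert d s hlt ih =>
    intro a ha hs i
    have hd : DegreeLE 𝒜 d a := fun n hn => DFinsupp.notMem_support_iff.1 fun hmem => by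
      rw [hs, Finset.mem_insert] at hmem
      rcases hmem with rfl | hmem
      · exact hn.false
      · exact (hlt n hmem).asymm hn
    have htop : (decompose 𝒜 a d : A) ∈ I := h ⟨a, ha, d, hd, rfl⟩
    set b := (decompose 𝒜).symm ((decompose 𝒜 a).erase d)
    have hdecb : decompose 𝒜 b = (decompose 𝒜 a).erase d := Equiv.apply_symm_apply _ _
    have hb : b ∈ I := by
      have hab : b + decompose 𝒜 a d = a := (decompose 𝒜).injective <| by
        rw [decompose_add, decompose_coe, hdecb]
        exact DFinsupp.erase_add_single d _
      rw [eq_sub_of_add_eq hab]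
      exact sub_mem ha htop
    have hsb : (decompose 𝒜 b).support = s := by
      rw [hdecb, DFinsupp.support_erase, hs, Finset.erase_insert fun hd => (hlt d hd).false]
    obtain rfl | hid := eq_or_ne i d
    · exact htop
    · rw [← DFinsupp.erase_ne hid, ← hdecb]
      exact ih b hb hsb i

theorem Ideal.IsHomogeneous.exists_mem_notMem_of_not_le {I J : Ideal A}
    (hI : I.IsHomogeneous 𝒜) (h : ¬I ≤ J) : ∃ i, ∃ b ∈ 𝒜 i, b ∈ I ∧ b ∉ J := by
  classical
  obtain ⟨x, hxI, hxJ⟩ := Set.not_subset.1 h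
  by_contra! hall
  rw [← sum_support_decompose 𝒜 x] at hxJ
  exact hxJ (J.sum_mem fun i _ => hall i _ (decompose 𝒜 x i).2 (hI i hxI))

-- Mathlib's `Ideal.IsHomogeneous.mul` is stated for commutative rings only.
theorem Ideal.IsHomogeneous.mul' {I J : Ideal A} (hI : I.IsHomogeneous 𝒜)
    (hJ : J.IsHomogeneous 𝒜) : (I * J).IsHomogeneous 𝒜 := by
  classical
  have : I * J = Ideal.span {z | ∃ i j, ∃ x ∈ I, ∃ y ∈ J, x ∈ 𝒜 i ∧ y ∈ 𝒜 j ∧ x * y = z} := by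
    refine le_antisymm (Ideal.mul_le.2 fun x hx y hy => ?_) (Ideal.span_le.2 ?_)
    · rw [← sum_support_decompose 𝒜 x, ← sum_support_decompose 𝒜 y, Finset.sum_mul_sum]
      exact Ideal.sum_mem _ fun i _ => Ideal.sum_mem _ fun j _ => Ideal.subset_span
        ⟨i, j, _, hI i hx, _, hJ j hy, (decompose 𝒜 x i).2, (decompose 𝒜 y j).2, rfl⟩
    · rintro _ ⟨i, j, x, hx, y, hy, -, -, rfl⟩
      exact Ideal.mul_mem_mul hx hy
  rw [this]
  refine Ideal.homogeneous_span 𝒜 _ ?_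
  rintro _ ⟨i, j, x, -, y, -, hxi, hyj, rfl⟩
  exact ⟨i + j, SetLike.GradedMul.mul_mem hxi hyj⟩

theorem Ideal.IsHomogeneous.pow {I : Ideal A} (hI : I.IsHomogeneous 𝒜) (n : ℕ) :
    (I ^ n).IsHomogeneous 𝒜 := by
  induction n with
  | zero => rw [Submodule.pow_zero, Ideal.one_eq_top]; exact .top 𝒜
  | succ n ih => rw [Submodule.pow_succ]; exact ih.mul' hI

variable (𝒜) in
theorem Ring.isHomogeneous_jacobson [IsSemiprimaryRing A] :
    (Ring.jacobson A).IsHomogeneous 𝒜 := by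
  obtain ⟨m, hm⟩ := IsSemiprimaryRing.isNilpotent (R := A)
  have hnil : IsNilpotent (leadingIdeal 𝒜 (Ring.jacobson A)) :=
    ⟨m, le_bot_iff.1 <| (leadingIdeal_pow_le _ m).trans <| by
      rw [hm, Submodule.zero_eq_bot, leadingIdeal_bot]⟩
  exact .of_leadingForms_subset fun x hx =>
    Ring.le_jacobson_of_isNilpotent hnil (Ideal.subset_span hx)

end Graded

section GradedRadical

variable {k A : Type} [Semiring k] [Ring A] [Module k A] (gA : ℤ → Submodule k A)
  [GradedRing gA]

theorem isGradedSubmodule_iff_isHomogeneous (N : Ideal A) :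
    IsGradedSubmodule gA N ↔ N.IsHomogeneous gA := by
  classical
  constructor
  · intro h
    rw [h]
    refine Ideal.homogeneous_span gA _ fun x hx => ?_
    obtain ⟨n, -, hn⟩ := Set.mem_iUnion.1 hx
    exact ⟨n, hn⟩
  · intro h
    refine le_antisymm (fun x hx => ?_)
      (Submodule.span_le.2 (Set.iUnion_subset fun _ => Set.inter_subset_left))
    rw [← sum_support_decompose gA x]
    exact Submodule.sum_mem _ fun i _ =>
      Submodule.subset_span (Set.mem_iUnion.2 ⟨i, h i hx, (decompose gA x i).2⟩)

theorem isMaxGradedSubmodule_iff (N : Ideal A) :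
    IsMaxGradedSubmodule gA N ↔
      N.IsHomogeneous gA ∧ N ≠ ⊤ ∧ ∀ N' : Ideal A, N'.IsHomogeneous gA → N < N' → N' = ⊤ := by
  simp only [IsMaxGradedSubmodule, isGradedSubmodule_iff_isHomogeneous]

theorem isHomogeneous_gradedRadical : (gradedRadical gA).IsHomogeneous gA :=
  Ideal.IsHomogeneous.sInf fun N hN => ((isMaxGradedSubmodule_iff gA N).1 hN).1

theorem jacobson_le_gradedRadical (hJ : (Ring.jacobson A).IsHomogeneous gA) :
    Ring.jacobson A ≤ gradedRadical gA := by
  refine le_sInf fun N hN => ?_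
  obtain ⟨hN, hNtop, hNmax⟩ := (isMaxGradedSubmodule_iff gA N).1 hN
  by_contra hJN
  have hsup : Ring.jacobson A ⊔ N = ⊤ :=
    hNmax _ (hJ.sup hN) (lt_of_le_of_ne le_sup_right fun h => hJN (h ▸ le_sup_left))
  obtain ⟨j, hj, n, hn, hjn⟩ := Submodule.mem_sup.1 (hsup ▸ Submodule.mem_top : (1 : A) ∈ _)
  obtain ⟨u, hu⟩ := Ideal.exists_mul_sub_mem_of_sub_one_mem_jacobson (I := ⊥) n <| by
    rw [Ideal.jacobson_bot, ← hjn, sub_add_cancel_right]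
    exact neg_mem hj
  rw [Submodule.mem_bot, sub_eq_zero] at hu
  exact hNtop ((Ideal.eq_top_iff_one N).2 (hu ▸ N.mul_mem_left u hn))

theorem isMaxGradedSubmodule_comap_toSpanSingleton {X X' : Ideal A}
    (hX' : X'.IsHomogeneous gA) (hX'X : X' ≤ X)
    (hmax : ∀ Y : Ideal A, Y.IsHomogeneous gA → X' < Y → Y ≤ X → Y = X)
    {d : ℤ} {s : A} (hs : s ∈ gA d) (hsX : s ∈ X) (hsX' : s ∉ X') :
    IsMaxGradedSubmodule gA (Submodule.comap (LinearMap.toSpanSingleton A A s) X') := by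
  have mem_comap (c : A) :
      c ∈ Submodule.comap (LinearMap.toSpanSingleton A A s) X' ↔ c * s ∈ X' := Iff.rfl
  refine (isMaxGradedSubmodule_iff gA _).2 ⟨fun i c hc => ?_, fun htop => ?_, fun K hK hlt => ?_⟩
  · rw [mem_comap, ← coe_decompose_mul_add_of_right_mem gA hs]
    exact hX' (i + d) hc
  · exact hsX' (by simpa using (mem_comap 1).1 (htop ▸ Submodule.mem_top))
  obtain ⟨i, b, hb, hbK, hbs⟩ := hK.exists_mem_notMem_of_not_le (not_le_of_gt hlt)
  have hY : (Ideal.span {b * s} ⊔ X').IsHomogeneous gA := by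
    refine (Ideal.homogeneous_span gA _ ?_).sup hX'
    rintro _ rfl
    exact ⟨i + d, SetLike.GradedMul.mul_mem hb hs⟩
  have hYX : Ideal.span {b * s} ⊔ X' = X := by
    refine hmax _ hY (lt_of_le_of_ne le_sup_right fun h => hbs ?_) (sup_le ?_ hX'X)
    · exact h ▸ Submodule.mem_sup_left (Ideal.mem_span_singleton_self _)
    · exact (Ideal.span_singleton_le_iff_mem _).2 (X.mul_mem_left b hsX)
  obtain ⟨c, x', hx', hcx⟩ := Ideal.mem_span_singleton_sup.1 (hYX ▸ hsX)
  have h1 : 1 - c * b ∈ K := hlt.le <| (mem_comap _).2 <| by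
    rw [sub_mul, one_mul, mul_assoc, ← eq_sub_of_add_eq' hcx]
    exact hx'
  rw [Ideal.eq_top_iff_one, ← sub_add_cancel 1 (c * b)]
  exact K.add_mem h1 (K.mul_mem_left c hbK)

theorem gradedRadical_mul_le {X X' : Ideal A} (hX : X.IsHomogeneous gA)
    (hX' : X'.IsHomogeneous gA) (hX'X : X' ≤ X)
    (hmax : ∀ Y : Ideal A, Y.IsHomogeneous gA → X' < Y → Y ≤ X → Y = X) :
    gradedRadical gA * X ≤ X' := by
  classical
  refine Ideal.mul_le.2 fun r hr x hx => ?_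
  rw [← sum_support_decompose gA x, Finset.mul_sum]
  refine X'.sum_mem fun i _ => ?_
  by_cases hxi : (decompose gA x i : A) ∈ X'
  · exact X'.mul_mem_left r hxi
  · have hK := isMaxGradedSubmodule_comap_toSpanSingleton gA hX' hX'X hmax
      (decompose gA x i).2 (hX i hx) hxi
    exact sInf_le (s := {N | IsMaxGradedSubmodule gA N}) hK hr

theorem gradedRadical_mul_lt [IsNoetherianRing A] {X : Ideal A} (hX : X.IsHomogeneous gA)
    (hX0 : X ≠ ⊥) : gradedRadical gA * X < X := by
  obtain ⟨X', ⟨hX', hX'X⟩, hmax⟩ := set_has_maximal_iff_noetherian.2 inferInstance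
    {Y : Ideal A | Y.IsHomogeneous gA ∧ Y < X} ⟨⊥, .bot gA, bot_lt_iff_ne_bot.2 hX0⟩
  refine (gradedRadical_mul_le gA hX hX' hX'X.le fun Y hY hlt hle => ?_).trans_lt hX'X
  by_contra hne
  exact hmax Y ⟨hY, lt_of_le_of_ne hle hne⟩ hlt

theorem isNilpotent_gradedRadical [IsArtinianRing A] : IsNilpotent (gradedRadical gA) := by
  set R := gradedRadical gA
  obtain ⟨n, hn⟩ := IsArtinian.monotone_stabilizes
    ⟨(R ^ ·), fun _ _ h => Ideal.pow_le_pow_right h⟩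
  have hstab : R * R ^ (n + 1) = R ^ (n + 1) := by
    rw [← Submodule.pow_succ' _ n.succ_ne_zero]
    exact (hn (n + 2) (by omega)).symm.trans (hn (n + 1) (by omega))
  refine ⟨n + 1, by_contra fun hne => ?_⟩
  exact (gradedRadical_mul_lt gA ((isHomogeneous_gradedRadical gA).pow _) hne).ne hstab

theorem jacobson_eq_gradedRadical [IsArtinianRing A] : Ring.jacobson A = gradedRadical gA :=
  le_antisymm (jacobson_le_gradedRadical gA (Ring.isHomogeneous_jacobson gA))
    (Ring.le_jacobson_of_isNilpotent (isNilpotent_gradedRadical gA))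

end GradedRadical

/-- Let `Ā` be a finite-dimensional ℤ-graded `k`-algebra.  Then the
Jacobson radical of `Ā` (the intersection of all maximal left ideals of `Ā`) coincides
with the graded radical `rad^gr(Ā)` (the intersection of all maximal graded left
ideals); in particular, the Jacobson radical of `Ā` is a homogeneous (graded)
two-sided ideal. -/
theorem statement7 {k A : Type} [Field k] [Ring A] [Algebra k A] [FiniteDimensional k A]
    (gA : ℤ → Submodule k A) [GradedAlgebra gA] :
    sInf {I : Ideal A | I.IsMaximal} = gradedRadical gA ∧
      IsGradedSubmodule gA (sInf {I : Ideal A | I.IsMaximal} : Ideal A) ∧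
      ∀ x ∈ sInf {I : Ideal A | I.IsMaximal}, ∀ a : A,
        x * a ∈ sInf {I : Ideal A | I.IsMaximal} := by
  have := IsArtinianRing.of_finite k A
  rw [← Ring.jacobson_eq_sInf_isMaximal]
  exact ⟨jacobson_eq_gradedRadical gA,
    (isGradedSubmodule_iff_isHomogeneous gA _).2 (Ring.isHomogeneous_jacobson gA),
    fun x hx a => (Ring.jacobson A).mul_mem_right a hx⟩
end

section
/- Let Ā be a finite-dimensional ℤ-graded k-algebra and let M be a graded Ā-module. Then: (a) M is a sum of graded-simple graded submodules if and only if the underlying (ungraded) Ā-module M is semisimple; (b) M is graded-simple (nonzero with only graded submodules 0 and M) if and only if the underlying Ā-module M is simple. -/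
/-!
Graded-simple implies simple: if `P` is a nonzero submodule of a graded-simple `N`, pick `x ∈ P`
with the fewest homogeneous components. Each component `x_d` generates `N`, and by minimality a
homogeneous element killing `x_d` kills `x`, hence every other component `x_{d'}`. Starting
from `1`, a homogeneous `a` with `a • x_{d'} ≠ 0` gives `a • x_d ≠ 0`, and `a • x_d = b • x_{d'}`
with `deg b = deg a + d - d'`. So `A` would have nonzero components in all degrees `t (d - d')`;
as `A` is finite-dimensional, `x` is homogeneous and `P = N`.

Semisimple implies a sum of graded-simples: the sum `Σ` of the graded-simple submodules is graded.
The degree-zero part `x ↦ ∑ₙ (p xₙ)ₙ` of an `A`-linear projection `p` onto `Σ` is again an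
`A`-linear projection onto `Σ`, and its kernel is a graded complement. Every nonzero graded
submodule contains a graded-simple one (of minimal dimension inside some `A m`, `m` homogeneous),
so this complement is zero.
-/

def IsGradedSimple {k A M : Type} [Semiring k] [Ring A] [AddCommGroup M] [Module A M]
    [Module k M] (gM : ℤ → Submodule k M) (N : Submodule A M) : Prop :=
  IsGradedSubmodule gM N ∧ N ≠ ⊥ ∧
    ∀ N' : Submodule A M, IsGradedSubmodule gM N' → N' ≤ N → N' = ⊥ ∨ N' = N

open DirectSum

section Decomposition

variable {ι k M : Type*} [DecidableEq ι] [Semiring k] [AddCommMonoid M] [Module k M]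
  (gM : ι → Submodule k M) [Decomposition gM]

noncomputable def gradedProj (n : ι) : M →ₗ[k] M :=
  (gM n).subtype ∘ₗ component k ι (fun i => gM i) n ∘ₗ (decomposeLinearEquiv gM).toLinearMap

variable {gM}

theorem gradedProj_apply (n : ι) (x : M) : gradedProj gM n x = decompose gM x n := rfl

theorem gradedProj_apply_mem (n : ι) (x : M) : gradedProj gM n x ∈ gM n := (decompose gM x n).2

theorem gradedProj_of_mem {n : ι} {x : M} (hx : x ∈ gM n) : gradedProj gM n x = x :=
  decompose_of_mem_same gM hx

theorem gradedProj_of_mem_of_ne {m n : ι} {x : M} (hx : x ∈ gM n) (h : m ≠ n) :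
    gradedProj gM m x = 0 :=
  decompose_of_mem_ne gM hx h.symm

open scoped Classical in
theorem mem_support_decompose_iff {n : ι} {x : M} :
    n ∈ (decompose gM x).support ↔ gradedProj gM n x ≠ 0 := by
  rw [DFinsupp.mem_support_iff, ne_eq, ne_eq, gradedProj_apply, ZeroMemClass.coe_eq_zero]

variable (gM) in
open scoped Classical in
theorem support_decompose_nonempty {x : M} (hx : x ≠ 0) : (decompose gM x).support.Nonempty := by
  rw [Finset.nonempty_iff_ne_empty, ne_eq, DFinsupp.support_eq_empty, ← decompose_zero gM]
  exact (decompose gM).injective.ne hx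

open scoped Classical in
theorem sum_gradedProj (x : M) : ∑ n ∈ (decompose gM x).support, gradedProj gM n x = x :=
  sum_support_decompose gM x

end Decomposition

section GradedModule

variable {k A M : Type} [CommSemiring k] [Ring A] [Algebra k A]
  [AddCommGroup M] [Module A M] [Module k M]
  (gA : ℤ → Submodule k A) {gM : ℤ → Submodule k M} [SetLike.GradedSMul gA gM]

variable {gA} in
theorem smul_mem_graded {i j : ℤ} {a : A} {m : M} (ha : a ∈ gA i) (hm : m ∈ gM j) :
    a • m ∈ gM (i + j) :=
  SetLike.GradedSMul.smul_mem ha hm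

variable [Decomposition gM]

variable {gA} in
theorem gradedProj_add_smul {i : ℤ} {a : A} (ha : a ∈ gA i) (n : ℤ) (x : M) :
    gradedProj gM (i + n) (a • x) = a • gradedProj gM n x := by
  induction x using Decomposition.inductionOn gM with
  | zero => simp
  | @homogeneous j m =>
    obtain rfl | hne := eq_or_ne n j
    · rw [gradedProj_of_mem (smul_mem_graded ha m.2), gradedProj_of_mem m.2]
    · rw [gradedProj_of_mem_of_ne (smul_mem_graded ha m.2) (by omega),
        gradedProj_of_mem_of_ne m.2 hne, smul_zero]
  | add x y hx hy => rw [smul_add, map_add, map_add, hx, hy, smul_add]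

variable {gA} in
open scoped Classical in
theorem smul_eq_zero_of_card_support_le {P : Submodule A M} {x : M} (hxP : x ∈ P)
    (hmin : ∀ y ∈ P, y ≠ 0 → (decompose gM x).support.card ≤ (decompose gM y).support.card)
    {d : ℤ} (hd : d ∈ (decompose gM x).support) {i : ℤ} {a : A} (ha : a ∈ gA i)
    (h : a • gradedProj gM d x = 0) : a • x = 0 := by
  by_contra hax
  have hsub : (decompose gM (a • x)).support ⊆
      ((decompose gM x).support.erase d).image (i + ·) := by
    intro n hn
    rw [mem_support_decompose_iff, show n = i + (n - i) by ring, gradedProj_add_smul ha] at hn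
    refine Finset.mem_image.2 ⟨n - i, Finset.mem_erase.2 ⟨fun hnd => hn (hnd ▸ h), ?_⟩, by ring⟩
    exact mem_support_decompose_iff.2 fun h0 => hn (by rw [h0, smul_zero])
  have hle := (Finset.card_le_card hsub).trans Finset.card_image_le
  rw [Finset.card_erase_of_mem hd] at hle
  have := hmin _ (P.smul_mem a hxP) hax
  have := Finset.card_pos.2 ⟨d, hd⟩
  omega

variable [GradedAlgebra gA]

theorem gradedProj_smul_of_mem {d : ℤ} {m : M} (hm : m ∈ gM d) (a : A) (n : ℤ) :
    gradedProj gM n (a • m) = (decompose gA a (n - d) : A) • m := by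
  induction a using Decomposition.inductionOn gA with
  | zero => simp
  | @homogeneous i a =>
    obtain rfl | hne := eq_or_ne (n - d) i
    · rw [gradedProj_of_mem (by simpa using smul_mem_graded a.2 hm), decompose_coe, of_eq_same]
    · rw [gradedProj_of_mem_of_ne (smul_mem_graded a.2 hm) (by omega), decompose_coe,
        of_eq_of_ne _ _ _ hne, ZeroMemClass.coe_zero, zero_smul]
  | add a b ha hb => rw [add_smul, map_add, ha, hb, decompose_add, DirectSum.add_apply,
      Submodule.coe_add, add_smul]

include gA in
theorem isGradedSubmodule_iff {N : Submodule A M} :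
    IsGradedSubmodule gM N ↔ ∀ x ∈ N, ∀ n, gradedProj gM n x ∈ N := by
  classical
  constructor
  · intro hN x hx
    rw [hN] at hx
    induction hx using Submodule.span_induction with
    | mem y hy =>
      obtain ⟨_, ⟨j, rfl⟩, hyN, hyj⟩ := hy
      intro n
      obtain rfl | hne := eq_or_ne n j
      · rwa [gradedProj_of_mem hyj]
      · rw [gradedProj_of_mem_of_ne hyj hne]
        exact N.zero_mem
    | zero => simp
    | add x y _ _ hx hy => intro n; rw [map_add]; exact N.add_mem (hx n) (hy n)
    | smul a x _ hx =>
      intro n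
      rw [← sum_gradedProj (gM := gA) a, Finset.sum_smul, map_sum]
      refine N.sum_mem fun i _ => ?_
      rw [show n = i + (n - i) by ring, gradedProj_add_smul (gradedProj_apply_mem i a)]
      exact N.smul_mem _ (hx _)
  · intro h
    refine le_antisymm (fun x hx => ?_) (Submodule.span_le.2 fun y ⟨_, ⟨j, rfl⟩, hy⟩ => hy.1)
    rw [← sum_gradedProj (gM := gM) x]
    exact Submodule.sum_mem _ fun n _ =>
      Submodule.subset_span (Set.mem_iUnion.2 ⟨n, h x hx n, gradedProj_apply_mem n x⟩)

include gA in
theorem IsGradedSubmodule.gradedProj_mem {N : Submodule A M} (hN : IsGradedSubmodule gM N)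
    {x : M} (hx : x ∈ N) (n : ℤ) : gradedProj gM n x ∈ N :=
  (isGradedSubmodule_iff gA).1 hN x hx n

include gA in
theorem isGradedSubmodule_top : IsGradedSubmodule gM (⊤ : Submodule A M) :=
  (isGradedSubmodule_iff gA).2 fun _ _ _ => trivial

include gA in
theorem isGradedSubmodule_sSup {S : Set (Submodule A M)}
    (hS : ∀ N ∈ S, IsGradedSubmodule gM N) : IsGradedSubmodule gM (sSup S) := by
  refine (isGradedSubmodule_iff gA).2 fun x hx n => ?_
  rw [sSup_eq_iSup'] at hx ⊢
  induction hx using Submodule.iSup_induction' with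
  | mem N y hy => exact Submodule.mem_iSup_of_mem N ((hS N N.2).gradedProj_mem gA hy n)
  | zero => simp
  | add y z _ _ hy hz => rw [map_add]; exact Submodule.add_mem _ hy hz

include gA in
theorem isGradedSubmodule_span_singleton {d : ℤ} {m : M} (hm : m ∈ gM d) :
    IsGradedSubmodule gM (Submodule.span A {m}) := by
  refine (isGradedSubmodule_iff gA).2 fun x hx n => ?_
  obtain ⟨a, rfl⟩ := Submodule.mem_span_singleton.1 hx
  rw [gradedProj_smul_of_mem gA hm]
  exact Submodule.smul_mem _ _ (Submodule.mem_span_singleton_self m)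

theorem exists_smul_eq_of_mem_span_singleton {d n : ℤ} {m y : M} (hm : m ∈ gM d)
    (hy : y ∈ Submodule.span A {m}) (hyn : y ∈ gM n) : ∃ a ∈ gA (n - d), a • m = y := by
  obtain ⟨b, rfl⟩ := Submodule.mem_span_singleton.1 hy
  exact ⟨_, (decompose gA b (n - d)).2,
    (gradedProj_smul_of_mem gA hm b n).symm.trans (gradedProj_of_mem hyn)⟩

include gA in
theorem IsGradedSubmodule.exists_homogeneous_ne_zero {N : Submodule A M}
    (hN : IsGradedSubmodule gM N) (hN0 : N ≠ ⊥) : ∃ n, ∃ m ∈ N, m ∈ gM n ∧ m ≠ 0 := by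
  classical
  obtain ⟨x, hxN, hx0⟩ := Submodule.exists_mem_ne_zero_of_ne_bot hN0
  obtain ⟨n, hn⟩ := support_decompose_nonempty gM hx0
  exact ⟨n, _, hN.gradedProj_mem gA hxN n, gradedProj_apply_mem n x, mem_support_decompose_iff.1 hn⟩

include gA in
theorem IsGradedSimple.span_singleton_eq {N : Submodule A M} (hN : IsGradedSimple gM N) {d : ℤ}
    {m : M} (hm : m ∈ gM d) (hmN : m ∈ N) (hm0 : m ≠ 0) : Submodule.span A {m} = N :=
  (hN.2.2 _ (isGradedSubmodule_span_singleton gA hm)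
    ((Submodule.span_singleton_le_iff_mem _ _).2 hmN)).resolve_left
    (by rwa [Submodule.span_singleton_eq_bot])

end GradedModule

section DegreeZeroPart

variable {ι k M : Type*} [DecidableEq ι] [Semiring k] [AddCommMonoid M] [Module k M]
  (gM : ι → Submodule k M) [Decomposition gM]

noncomputable def degreeZeroPart (f : M →ₗ[k] M) : M →ₗ[k] M :=
  toModule k ι M (fun n => gradedProj gM n ∘ₗ f ∘ₗ (gM n).subtype) ∘ₗ
    (decomposeLinearEquiv gM).toLinearMap

variable {gM}

theorem degreeZeroPart_apply_of_mem (f : M →ₗ[k] M) {n : ι} {x : M} (hx : x ∈ gM n) :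
    degreeZeroPart gM f x = gradedProj gM n (f x) := by
  simp [degreeZeroPart, decomposeLinearEquiv_apply_coe gM n ⟨x, hx⟩, toModule_lof]

open scoped Classical in
theorem degreeZeroPart_apply (f : M →ₗ[k] M) (x : M) :
    degreeZeroPart gM f x =
      ∑ n ∈ (decompose gM x).support, gradedProj gM n (f (gradedProj gM n x)) := by
  conv_lhs => rw [← sum_gradedProj (gM := gM) x, map_sum]
  exact Finset.sum_congr rfl fun n _ =>
    degreeZeroPart_apply_of_mem f (gradedProj_apply_mem n x)

theorem gradedProj_degreeZeroPart (f : M →ₗ[k] M) (n : ι) (x : M) :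
    gradedProj gM n (degreeZeroPart gM f x) = degreeZeroPart gM f (gradedProj gM n x) := by
  induction x using Decomposition.inductionOn gM with
  | zero => simp
  | @homogeneous j m =>
    rw [degreeZeroPart_apply_of_mem f m.2]
    obtain rfl | hne := eq_or_ne n j
    · rw [gradedProj_of_mem m.2, gradedProj_of_mem (gradedProj_apply_mem n _),
        degreeZeroPart_apply_of_mem f m.2]
    · rw [gradedProj_of_mem_of_ne (gradedProj_apply_mem j _) hne,
        gradedProj_of_mem_of_ne m.2 hne, map_zero]
  | add x y hx hy => simp only [map_add, hx, hy]

end DegreeZeroPart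

section GradedComplement

variable {k A M : Type} [CommSemiring k] [Ring A] [Algebra k A]
  [AddCommGroup M] [Module A M] [Module k M] [IsScalarTower k A M]
  (gA : ℤ → Submodule k A) [GradedAlgebra gA]
  {gM : ℤ → Submodule k M} [Decomposition gM] [SetLike.GradedSMul gA gM]

include gA in
theorem degreeZeroPart_smul (f : M →ₗ[A] M) (a : A) (x : M) :
    degreeZeroPart gM (f.restrictScalars k) (a • x) =
      a • degreeZeroPart gM (f.restrictScalars k) x := by
  induction a using Decomposition.inductionOn gA with
  | zero => simp
  | @homogeneous i a =>
    induction x using Decomposition.inductionOn gM with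
    | zero => simp
    | @homogeneous j m =>
      rw [degreeZeroPart_apply_of_mem _ (smul_mem_graded a.2 m.2),
        degreeZeroPart_apply_of_mem _ m.2, LinearMap.restrictScalars_apply, map_smul,
        gradedProj_add_smul a.2, LinearMap.restrictScalars_apply]
    | add x y hx hy => rw [smul_add, map_add, map_add, hx, hy, smul_add]
  | add a b ha hb => rw [add_smul, map_add, ha, hb, add_smul]

variable (gM) in
noncomputable def degreeZeroPartₗ (f : M →ₗ[A] M) : M →ₗ[A] M where
  __ := degreeZeroPart gM (f.restrictScalars k)
  map_smul' := degreeZeroPart_smul gA f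

theorem degreeZeroPartₗ_apply (f : M →ₗ[A] M) (x : M) :
    degreeZeroPartₗ gA gM f x = degreeZeroPart gM (f.restrictScalars k) x := rfl

include gA in
theorem IsGradedSubmodule.exists_isGradedSubmodule_isCompl {U C : Submodule A M}
    (hU : IsGradedSubmodule gM U) (hUC : IsCompl U C) :
    ∃ Q : Submodule A M, IsGradedSubmodule gM Q ∧ IsCompl U Q := by
  classical
  set p := degreeZeroPartₗ gA gM (U.projection C hUC)
  have hp_mem : ∀ x, p x ∈ U := fun x => by
    rw [degreeZeroPartₗ_apply, degreeZeroPart_apply]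
    exact U.sum_mem fun n _ => hU.gradedProj_mem gA (Submodule.projection_apply_mem _ _) n
  have hp_id : ∀ u ∈ U, p u = u := fun u hu => by
    rw [degreeZeroPartₗ_apply, degreeZeroPart_apply]
    conv_rhs => rw [← sum_gradedProj (gM := gM) u]
    refine Finset.sum_congr rfl fun n _ => ?_
    rw [LinearMap.restrictScalars_apply,
      Submodule.projection_apply_of_mem_left _ (hU.gradedProj_mem gA hu n),
      gradedProj_of_mem (gradedProj_apply_mem n u)]
  refine ⟨LinearMap.ker p, (isGradedSubmodule_iff gA).2 fun x hx n => ?_, ?_, ?_⟩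
  · rw [LinearMap.mem_ker, degreeZeroPartₗ_apply, ← gradedProj_degreeZeroPart,
      ← degreeZeroPartₗ_apply gA, LinearMap.mem_ker.1 hx, map_zero]
  · refine Submodule.disjoint_def.2 fun u hu hpu => ?_
    rw [← hp_id u hu, LinearMap.mem_ker.1 hpu]
  · refine codisjoint_iff.2 (eq_top_iff.2 fun x _ => ?_)
    have hx : x = p x + (x - p x) := (add_sub_cancel _ _).symm
    refine hx ▸ Submodule.add_mem_sup (hp_mem x) ?_
    rw [LinearMap.mem_ker, map_sub, hp_id _ (hp_mem x), sub_self]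

end GradedComplement

theorem DirectSum.Decomposition.finite_setOf_ne_bot {ι K V : Type*} [DecidableEq ι] [Field K]
    [AddCommGroup V] [Module K V] [FiniteDimensional K V] (ℳ : ι → Submodule K V)
    [Decomposition ℳ] : {i | ℳ i ≠ ⊥}.Finite :=
  have := (Decomposition.isInternal ℳ).submodule_iSupIndep.fintypeNeBotOfFiniteDimensional
  Set.finite_coe_iff.1 (Finite.of_fintype {i // ℳ i ≠ ⊥})

theorem IsGradedSubmodule.exists_isGradedSimple_le_of_finiteDimensional {k A M : Type} [Field k]
    [Ring A] [Algebra k A] [AddCommGroup M] [Module A M] [Module k M] [IsScalarTower k A M]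
    {gM : ℤ → Submodule k M} {P : Submodule A M} (hP : IsGradedSubmodule gM P) (hP0 : P ≠ ⊥)
    [FiniteDimensional k (P.restrictScalars k)] :
    ∃ S ≤ P, IsGradedSimple gM S := by
  obtain ⟨S, ⟨hS, hS0, hSP⟩, hmin⟩ :=
    (measure fun S : Submodule A M => Module.finrank k (S.restrictScalars k)).wf.has_min
      {S | IsGradedSubmodule gM S ∧ S ≠ ⊥ ∧ S ≤ P} ⟨P, hP, hP0, le_rfl⟩
  refine ⟨S, hSP, hS, hS0, fun S' hS' hS'S => or_iff_not_imp_left.2 fun hS'0 => ?_⟩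
  have : FiniteDimensional k (S.restrictScalars k) :=
    Submodule.finiteDimensional_of_le (Submodule.restrictScalars_mono k hSP)
  exact Submodule.restrictScalars_injective k A M <|
    Submodule.eq_of_le_of_finrank_le (Submodule.restrictScalars_mono k hS'S)
      (not_lt.1 (hmin S' ⟨hS', hS'0, hS'S.trans hSP⟩))

section FiniteDimensional

variable {k A M : Type} [Field k] [Ring A] [Algebra k A] [FiniteDimensional k A]
  [AddCommGroup M] [Module A M] [Module k M]
  (gA : ℤ → Submodule k A) [GradedAlgebra gA]
  {gM : ℤ → Submodule k M} [Decomposition gM] [SetLike.GradedSMul gA gM]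

include gA in
theorem degree_eq_of_mem_span_singleton {d₁ d₂ : ℤ} {m₁ m₂ : M} (hm₁ : m₁ ∈ gM d₁)
    (hm₂ : m₂ ∈ gM d₂) (hm₂0 : m₂ ≠ 0) (hmem : m₁ ∈ Submodule.span A {m₂})
    (hann : ∀ i, ∀ a ∈ gA i, a • m₁ = 0 → a • m₂ = 0) : d₁ = d₂ := by
  by_contra hne
  have key : ∀ t : ℕ, ∃ a ∈ gA (t * (d₁ - d₂)), a • m₂ ≠ 0 := by
    intro t
    induction t with
    | zero => exact ⟨1, by simpa using SetLike.GradedOne.one_mem, by rwa [one_smul]⟩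
    | succ t ih =>
      obtain ⟨a, ha, ham⟩ := ih
      obtain ⟨b, hb, hba⟩ := exists_smul_eq_of_mem_span_singleton gA hm₂
        (Submodule.smul_mem _ a hmem) (smul_mem_graded ha hm₁)
      refine ⟨b, by convert hb using 2; push_cast; ring, ?_⟩
      rw [hba]
      exact fun h => ham (hann _ a ha h)
  refine (Decomposition.finite_setOf_ne_bot gA).not_infinite <|
    Set.infinite_of_injective_forall_mem (f := fun t : ℕ => (t : ℤ) * (d₁ - d₂))
      (fun s t hst => by exact_mod_cast mul_right_cancel₀ (sub_ne_zero.2 hne) hst) fun t => ?_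
  obtain ⟨a, ha, ham⟩ := key t
  exact fun h => ham (by rw [(Submodule.eq_bot_iff _).1 h a ha, zero_smul])

include gA in
theorem IsGradedSimple.isAtom {N : Submodule A M} (hN : IsGradedSimple gM N) : IsAtom N := by
  classical
  refine ⟨hN.2.1, fun P hPN => ?_⟩
  by_contra hP0
  obtain ⟨x, ⟨hxP, hx0⟩, hmin⟩ :=
    (measure fun x : M => (decompose gM x).support.card).wf.has_min {x | x ∈ P ∧ x ≠ 0}
      (Submodule.exists_mem_ne_zero_of_ne_bot hP0)
  have hmin' : ∀ y ∈ P, y ≠ 0 → (decompose gM x).support.card ≤ (decompose gM y).support.card :=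
    fun y hy hy0 => not_lt.1 (hmin y ⟨hy, hy0⟩)
  have hxN : x ∈ N := hPN.le hxP
  have hgen : ∀ d ∈ (decompose gM x).support, Submodule.span A {gradedProj gM d x} = N :=
    fun d hd => hN.span_singleton_eq gA (gradedProj_apply_mem d x) (hN.1.gradedProj_mem gA hxN d)
      (mem_support_decompose_iff.1 hd)
  have hdeg : ∀ d ∈ (decompose gM x).support, ∀ d' ∈ (decompose gM x).support, d = d' :=
    fun d hd d' hd' => degree_eq_of_mem_span_singleton gA (gradedProj_apply_mem d x)
      (gradedProj_apply_mem d' x) (mem_support_decompose_iff.1 hd')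
      (by rw [hgen d' hd']; exact hN.1.gradedProj_mem gA hxN d)
      fun i a ha h => by
        rw [← gradedProj_add_smul ha, smul_eq_zero_of_card_support_le hxP hmin' hd ha h, map_zero]
  obtain ⟨d, hd⟩ := support_decompose_nonempty gM hx0
  have hx : gradedProj gM d x = x := by
    conv_rhs => rw [← sum_gradedProj (gM := gM) x, Finset.eq_singleton_iff_unique_mem.2
      ⟨hd, fun d' hd' => (hdeg d hd d' hd').symm⟩, Finset.sum_singleton]
  refine hPN.ne (le_antisymm hPN.le ?_)
  rw [← hgen d hd, hx]
  exact (Submodule.span_singleton_le_iff_mem _ _).2 hxP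

variable [IsScalarTower k A M]

instance finiteDimensional_span_singleton (m : M) :
    FiniteDimensional k ((Submodule.span A {m}).restrictScalars k) := by
  rw [← LinearMap.range_toSpanSingleton, ← LinearMap.range_restrictScalars]; infer_instance

include gA in
theorem IsGradedSubmodule.exists_isGradedSimple_le {P : Submodule A M}
    (hP : IsGradedSubmodule gM P) (hP0 : P ≠ ⊥) : ∃ S ≤ P, IsGradedSimple gM S := by
  obtain ⟨n, m, hmP, hmn, hm0⟩ := hP.exists_homogeneous_ne_zero gA hP0
  obtain ⟨S, hSm, hS⟩ :=
    (isGradedSubmodule_span_singleton gA hmn).exists_isGradedSimple_le_of_finiteDimensional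
      (by rwa [ne_eq, Submodule.span_singleton_eq_bot])
  exact ⟨S, hSm.trans ((Submodule.span_singleton_le_iff_mem _ _).2 hmP), hS⟩

include gA in
theorem sSup_isGradedSimple_eq_top_iff :
    sSup {N : Submodule A M | IsGradedSimple gM N} = ⊤ ↔ IsSemisimpleModule A M := by
  refine ⟨fun h => .of_sSup_simples_eq_top (eq_top_mono (sSup_le_sSup fun N hN =>
    isSimpleModule_iff_isAtom.2 (hN.isAtom gA)) h), fun _ => ?_⟩
  set S := sSup {N : Submodule A M | IsGradedSimple gM N}
  obtain ⟨C, hC⟩ := exists_isCompl S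
  obtain ⟨Q, hQ, hSQ⟩ :=
    (isGradedSubmodule_sSup gA fun N hN => hN.1).exists_isGradedSubmodule_isCompl gA hC
  obtain rfl : Q = ⊥ := by
    by_contra hQ0
    obtain ⟨N, hNQ, hN⟩ := hQ.exists_isGradedSimple_le gA hQ0
    exact hN.2.1 (le_bot_iff.1 (hSQ.disjoint (le_sSup hN) hNQ))
  exact eq_top_of_isCompl_bot hSQ

end FiniteDimensional

/-- Let `Ā` be a finite-dimensional ℤ-graded `k`-algebra (here denoted
`A`) and let `M` be a graded `Ā`-module.  Then:

(a) `M` is a sum of graded-simple graded submodules if and only if the underlying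
(ungraded) `Ā`-module `M` is semisimple;

(b) `M` is graded-simple (nonzero, with only graded submodules `0` and `M`) if and
only if the underlying `Ā`-module `M` is simple. -/
theorem statement14 {k A M : Type} [Field k] [Ring A] [Algebra k A]
    [FiniteDimensional k A]
    (gA : ℤ → Submodule k A) [GradedAlgebra gA]
    [AddCommGroup M] [Module A M] [Module k M] [IsScalarTower k A M]
    (gM : ℤ → Submodule k M) [DirectSum.Decomposition gM]
    (hsmul : ∀ (i j : ℤ), ∀ a ∈ gA i, ∀ m ∈ gM j, a • m ∈ gM (i + j)) :
    ((sSup {N : Submodule A M | IsGradedSubmodule gM N ∧ N ≠ ⊥ ∧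
          ∀ N' : Submodule A M, IsGradedSubmodule gM N' → N' ≤ N → N' = ⊥ ∨ N' = N} =
        (⊤ : Submodule A M)) ↔
      IsSemisimpleModule A M) ∧
    ((Nontrivial M ∧ ∀ N : Submodule A M, IsGradedSubmodule gM N → N = ⊥ ∨ N = ⊤) ↔
      IsSimpleModule A M) := by
  have : SetLike.GradedSMul gA gM := ⟨fun i j _ _ ha hm => hsmul i j _ ha _ hm⟩
  refine ⟨sSup_isGradedSimple_eq_top_iff gA, fun ⟨_, h⟩ => ?_, fun _ => ?_⟩
  · have htop : IsGradedSimple gM (⊤ : Submodule A M) :=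
      ⟨isGradedSubmodule_top gA, top_ne_bot, fun N hN _ => h N hN⟩
    exact (isSimpleModule_iff A M).2 (isSimpleOrder_iff_isAtom_top.2 (htop.isAtom gA))
  · exact ⟨IsSimpleModule.nontrivial A M, fun N _ => eq_bot_or_eq_top N⟩
end
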